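/- arXiv:1008.0116 — 4 statements merged into one kernel-verified Lean document; each statement's English description precedes it below -/
import Mathlib

section
/- For the two-sided exponential mixture with mgf M(w) = pθ₁/(θ₁−w) + (1−p)θ₂/(θ₂+w) and for u ∈ (0,1), the number w_u = (θ₁ − θ₂ + u((1−p)θ₂ − pθ₁) + √((θ₁−θ₂+u((1−p)θ₂−pθ₁))² + 4(1−u)θ₁θ₂))/2 satisfies M(w_u) = 1/u and 0 < w_u < θ₁. -/
open Real

/-!
Clearing denominators turns `M w = 1 / u` into `w ^ 2 = b w + c`, where
`b = θ₁ - θ₂ + u ((1 - p) θ₂ - p θ₁)` and `c = (1 - u) θ₁ θ₂ > 0`, and `w_u` is the larger root.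
Since `c > 0` that root is positive, and it lies below `θ₁` because
`θ₁ ^ 2 - b θ₁ - c = u p θ₁ (θ₁ + θ₂) > 0` with `θ₁` right of the vertex `b / 2`.
-/

/-- The larger root of `x ^ 2 = b * x + c`. -/
noncomputable def quadRoot (b c : ℝ) : ℝ := (b + √(b ^ 2 + 4 * c)) / 2

theorem quadRoot_sq_eq {b c : ℝ} (h : 0 ≤ b ^ 2 + 4 * c) :
    quadRoot b c ^ 2 = b * quadRoot b c + c := by
  unfold quadRoot
  linear_combination (1 / 4 : ℝ) * Real.sq_sqrt h

theorem quadRoot_pos {b c : ℝ} (hc : 0 < c) : 0 < quadRoot b c := by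
  have : |b| < √(b ^ 2 + 4 * c) := by
    rw [← Real.sqrt_sq_eq_abs]
    exact Real.sqrt_lt_sqrt (sq_nonneg b) (by linarith)
  unfold quadRoot
  linarith [neg_abs_le b]

theorem quadRoot_lt {b c t : ℝ} (hb : b < 2 * t) (ht : b * t + c < t ^ 2) :
    quadRoot b c < t := by
  have : √(b ^ 2 + 4 * c) < 2 * t - b :=
    (Real.sqrt_lt' (by linarith)).2 (by nlinarith)
  unfold quadRoot
  linarith

theorem mixture_eq_inv_of_sq_eq {p θ₁ θ₂ u w : ℝ} (h₁ : θ₁ - w ≠ 0) (h₂ : θ₂ + w ≠ 0)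
    (hu : u ≠ 0)
    (hw : w ^ 2 = (θ₁ - θ₂ + u * ((1 - p) * θ₂ - p * θ₁)) * w + (1 - u) * θ₁ * θ₂) :
    p * θ₁ / (θ₁ - w) + (1 - p) * θ₂ / (θ₂ + w) = 1 / u := by
  rw [div_add_div _ _ h₁ h₂, div_eq_div_iff (mul_ne_zero h₁ h₂) hu]
  linear_combination hw

/-- the explicit root `w_u` satisfies `M(w_u) = 1/u` and `0 < w_u < θ₁`. -/
theorem stmt_7 (p θ₁ θ₂ u : ℝ) (hθ₁ : 0 < θ₁) (hθ₂ : 0 < θ₂)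
    (hp : p ∈ Set.Ioo (0 : ℝ) 1) (hu : u ∈ Set.Ioo (0 : ℝ) 1)
    (wu : ℝ)
    (hwu : wu = (θ₁ - θ₂ + u * ((1 - p) * θ₂ - p * θ₁)
      + Real.sqrt ((θ₁ - θ₂ + u * ((1 - p) * θ₂ - p * θ₁)) ^ 2
          + 4 * (1 - u) * θ₁ * θ₂)) / 2) :
    p * θ₁ / (θ₁ - wu) + (1 - p) * θ₂ / (θ₂ + wu) = 1 / u
      ∧ 0 < wu ∧ wu < θ₁ := by
  obtain ⟨hp0, -⟩ := hp
  obtain ⟨hu0, hu1⟩ := hu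
  set b := θ₁ - θ₂ + u * ((1 - p) * θ₂ - p * θ₁)
  have hc : 0 < (1 - u) * θ₁ * θ₂ := by have := sub_pos.2 hu1; positivity
  have hw : wu = quadRoot b ((1 - u) * θ₁ * θ₂) := by rw [hwu, quadRoot]; ring_nf
  have hpos : 0 < wu := hw ▸ quadRoot_pos hc
  have hlt : wu < θ₁ := by
    have hgap : θ₁ ^ 2 - (b * θ₁ + (1 - u) * θ₁ * θ₂) = u * p * θ₁ * (θ₁ + θ₂) := by ring
    refine hw ▸ quadRoot_lt (by nlinarith [mul_pos hu0 hp0]) ?_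
    have : 0 < u * p * θ₁ * (θ₁ + θ₂) := by positivity
    linarith
  refine ⟨mixture_eq_inv_of_sq_eq (by linarith) (by linarith) hu0.ne' ?_, hpos, hlt⟩
  exact hw ▸ quadRoot_sq_eq (by positivity)
end

section
/- The function u ↦ w_u defined by w_u = (θ₁ − θ₂ + u((1−p)θ₂−pθ₁) + √((θ₁−θ₂+u((1−p)θ₂−pθ₁))² + 4(1−u)θ₁θ₂))/2 is strictly decreasing on [0,1], with w_0 = θ₁ and w_1 = max{0, (1−p)θ₁ − pθ₂}. -/
/-!
`w u` is the larger root of `X² - (θ₁ - θ₂ + u c) X - (1 - u) θ₁ θ₂` with `c = (1 - p) θ₂ - p θ₁`.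
Moving from `u` to `v > u` changes the value of this quadratic at `x = w u` by
`(v - u) (θ₁ θ₂ - c x)`, which is positive because `c < θ₂`; a positive value at a nonnegative
point lies to the right of the larger root, so `w v < w u`. At `u = 0` the quadratic is
`(X - θ₁)(X + θ₂)`, and at `u = 1` its roots are `0` and `(1 - p) θ₁ - p θ₂`.
-/

open Real Set

/-- The larger root of `X ^ 2 - b * X - q`. -/
noncomputable def largerRoot (b q : ℝ) : ℝ := (b + √(b ^ 2 + 4 * q)) / 2

section LargerRoot

variable {b q x : ℝ}

lemma largerRoot_sq (hq : 0 ≤ q) : largerRoot b q ^ 2 = b * largerRoot b q + q := by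
  have hsq := sq_sqrt (add_nonneg (sq_nonneg b) (mul_nonneg zero_le_four hq))
  unfold largerRoot
  linear_combination hsq / 4

lemma le_largerRoot (hq : 0 ≤ q) : b ≤ largerRoot b q := by
  have : b ≤ √(b ^ 2 + 4 * q) :=
    (le_abs_self b).trans ((sqrt_sq_eq_abs b).symm.le.trans
      (sqrt_le_sqrt (by linarith [mul_nonneg zero_le_four hq])))
  unfold largerRoot
  linarith

lemma largerRoot_pos (hq : 0 < q) : 0 < largerRoot b q := by
  have : |b| < √(b ^ 2 + 4 * q) := by
    rw [← sqrt_sq_eq_abs]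
    exact sqrt_lt_sqrt (sq_nonneg b) (by linarith)
  unfold largerRoot
  linarith [neg_abs_le b]

lemma largerRoot_lt_of_lt_sq (hq : 0 ≤ q) (hx : 0 ≤ x) (h : b * x + q < x ^ 2) :
    largerRoot b q < x := by
  have hr := largerRoot_sq (b := b) hq
  have hb := le_largerRoot (b := b) hq
  by_contra! hle
  -- `x ^ 2 - b * x - q = (x - r) * (x - (b - r))` for `r = largerRoot b q`, and `b - r ≤ 0`
  nlinarith [mul_nonneg (sub_nonneg.2 hle) (by linarith : 0 ≤ x + largerRoot b q - b)]

lemma largerRoot_zero (b : ℝ) : largerRoot b 0 = max 0 b := by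
  rw [largerRoot, mul_zero, add_zero, sqrt_sq_eq_abs]
  rcases le_total 0 b with hb | hb
  · rw [abs_of_nonneg hb, max_eq_right hb]; ring
  · rw [abs_of_nonpos hb, max_eq_left hb]; ring

lemma largerRoot_sub_mul {s t : ℝ} (hst : 0 ≤ s + t) : largerRoot (s - t) (s * t) = s := by
  have : (s - t) ^ 2 + 4 * (s * t) = (s + t) ^ 2 := by ring
  rw [largerRoot, this, sqrt_sq hst]
  ring

end LargerRoot

lemma strictAntiOn_largerRoot_segment {s t c : ℝ} (hs : 0 < s) (ht : 0 < t) (hc : c < t) :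
    StrictAntiOn (fun u ↦ largerRoot (s - t + u * c) ((1 - u) * (s * t))) (Iic 1) := by
  intro u _ v (hv₁ : v ≤ 1) huv
  set x := largerRoot (s - t + u * c) ((1 - u) * (s * t))
  have hst : 0 < s * t := mul_pos hs ht
  have hqu : 0 < (1 - u) * (s * t) := mul_pos (by linarith) hst
  have hx : 0 < x := largerRoot_pos hqu
  have hxsq : x ^ 2 = (s - t + u * c) * x + (1 - u) * (s * t) := largerRoot_sq hqu.le
  -- otherwise `x ^ 2 ≤ (s - t + c) * x`, forcing `x < s`, and then `c * x < s * t`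
  have hcx : c * x < s * t := by
    by_contra! hge
    have hxs : x < s := by nlinarith
    nlinarith [mul_pos hx hs]
  refine largerRoot_lt_of_lt_sq (mul_nonneg (by linarith) hst.le) hx.le ?_
  nlinarith [mul_pos (sub_pos.2 huv) (sub_pos.2 hcx)]

/-- `u ↦ w_u` is strictly decreasing on `[0,1]`, with `w_0 = θ₁`
and `w_1 = max {0, (1-p)θ₁ - pθ₂}`. -/
theorem stmt_8 (p θ₁ θ₂ : ℝ) (hθ₁ : 0 < θ₁) (hθ₂ : 0 < θ₂)
    (hp : p ∈ Set.Ioo (0 : ℝ) 1)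
    (w : ℝ → ℝ)
    (hw : ∀ u, w u = (θ₁ - θ₂ + u * ((1 - p) * θ₂ - p * θ₁)
      + Real.sqrt ((θ₁ - θ₂ + u * ((1 - p) * θ₂ - p * θ₁)) ^ 2
          + 4 * (1 - u) * θ₁ * θ₂)) / 2) :
    StrictAntiOn w (Set.Icc 0 1)
      ∧ w 0 = θ₁ ∧ w 1 = max 0 ((1 - p) * θ₁ - p * θ₂) := by
  set c := (1 - p) * θ₂ - p * θ₁
  have hw' : w = fun u ↦ largerRoot (θ₁ - θ₂ + u * c) ((1 - u) * (θ₁ * θ₂)) := by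
    ext u
    rw [hw, largerRoot]
    ring_nf
  have hc : c < θ₂ := by nlinarith [hp.1]
  refine ⟨hw' ▸ (strictAntiOn_largerRoot_segment hθ₁ hθ₂ hc).mono Icc_subset_Iic_self, ?_, ?_⟩
  · simpa [hw'] using largerRoot_sub_mul (by linarith : 0 ≤ θ₁ + θ₂)
  · have : θ₁ - θ₂ + 1 * c = (1 - p) * θ₁ - p * θ₂ := by ring
    simp only [hw', this, sub_self, zero_mul, largerRoot_zero]
end

section
/- As w* → 0 (equivalently when (1−p)θ₁ = pθ₂), the boundary-crossing probability formula (1 − θ₂ e^{−w* a}/(w*+θ₂)) / (θ₁ e^{w* b}/(θ₁−w*) − θ₂ e^{−w* a}/(w*+θ₂)) tends to the limit (θ₁ + a θ₁θ₂)/(θ₁ + θ₂ + (a+b)θ₁θ₂). -/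
/-!
Numerator and denominator both vanish at `w = 0`, so the limit is the ratio of their
derivatives there, `(1/θ₂ + a) / (1/θ₁ + b + 1/θ₂ + a)`.
-/

open Real Filter Topology

/-- Away from `x`, `f y / g y` is the quotient of the slopes of `f` and `g` at `x`, so only
derivatives at `x` itself are needed. -/
theorem HasDerivAt.tendsto_div_of_eq_zero {𝕜 : Type*} [NontriviallyNormedField 𝕜]
    {f g : 𝕜 → 𝕜} {f' g' x : 𝕜} (hf : HasDerivAt f f' x) (hg : HasDerivAt g g' x)
    (hfx : f x = 0) (hgx : g x = 0) (hg' : g' ≠ 0) :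
    Tendsto (fun y => f y / g y) (𝓝[≠] x) (𝓝 (f' / g')) := by
  refine ((hasDerivAt_iff_tendsto_slope.mp hf).div
    (hasDerivAt_iff_tendsto_slope.mp hg) hg').congr' ?_
  filter_upwards [self_mem_nhdsWithin] with y hy
  rw [Pi.div_apply, slope_def_field, slope_def_field, hfx, hgx, sub_zero, sub_zero,
    div_div_div_cancel_right₀ (sub_ne_zero.mpr hy)]

theorem hasDerivAt_mul_exp_div_sub_zero {c k : ℝ} (hc : c ≠ 0) :
    HasDerivAt (fun w => c * exp (w * k) / (c - w)) (1 / c + k) 0 := by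
  have hexp : HasDerivAt (fun w => exp (w * k)) k 0 := by
    simpa using ((hasDerivAt_id (0 : ℝ)).mul_const k).exp
  refine ((hexp.const_mul c).div ((hasDerivAt_id 0).const_sub c)
    (by simpa using hc)).congr_deriv ?_
  simp only [id_eq, sub_zero, zero_mul, exp_zero]
  field_simp
  ring

theorem hasDerivAt_mul_exp_neg_div_add_zero {c k : ℝ} (hc : c ≠ 0) :
    HasDerivAt (fun w => c * exp (-w * k) / (w + c)) (-(1 / c + k)) 0 := by
  convert hasDerivAt_mul_exp_div_sub_zero (c := -c) (k := -k) (neg_ne_zero.mpr hc) using 1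
  · ext w
    rw [neg_mul_comm, neg_mul, ← neg_add', neg_div_neg_eq, add_comm w c]
  · rw [one_div_neg_eq_neg_one_div, neg_add]

/-- the limit of the boundary crossing probability as `w* → 0`. -/
theorem stmt_13 (θ₁ θ₂ a b : ℝ) (hθ₁ : 0 < θ₁) (hθ₂ : 0 < θ₂)
    (ha : 0 < a) (hb : 0 < b) :
    Tendsto (fun w : ℝ =>
        (1 - θ₂ * Real.exp (-w * a) / (w + θ₂))
          / (θ₁ * Real.exp (w * b) / (θ₁ - w) - θ₂ * Real.exp (-w * a) / (w + θ₂)))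
      (𝓝[≠] 0)
      (𝓝 ((θ₁ + a * θ₁ * θ₂) / (θ₁ + θ₂ + (a + b) * θ₁ * θ₂))) := by
  have hlower := hasDerivAt_mul_exp_neg_div_add_zero (k := a) hθ₂.ne'
  have hupper := hasDerivAt_mul_exp_div_sub_zero (k := b) hθ₁.ne'
  have hlimit : (θ₁ + a * θ₁ * θ₂) / (θ₁ + θ₂ + (a + b) * θ₁ * θ₂)
      = (0 - -(1 / θ₂ + a)) / (1 / θ₁ + b - -(1 / θ₂ + a)) := by
    have hden : 1 / θ₁ + b - -(1 / θ₂ + a) ≠ 0 := by rw [sub_neg_eq_add]; positivity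
    rw [div_eq_div_iff (by positivity) hden]
    field_simp
    ring
  rw [hlimit]
  exact ((hasDerivAt_const (0 : ℝ) (1 : ℝ)).sub hlower).tendsto_div_of_eq_zero
    (hupper.sub hlower) (by simp [hθ₂.ne']) (by simp [hθ₁.ne', hθ₂.ne'])
    (by rw [sub_neg_eq_add]; positivity)
end

section
/- Under the two-sided exponential mixture tilted at w_u (where M(w_u) = 1/u, u ∈ (0,1)), the mean step is strictly positive: Ẽ_{w_u}(Z) = pθ₁u/(θ₁−w_u)² − (1−p)θ₂u/(θ₂+w_u)² > 0. -/
/-!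
Tilting by `exp (w x)` keeps both halves of the two-sided exponential law exponential, with rates
`θ₁ - w` and `θ₂ + w`, so each half contributes a `Γ(2)` integral `∫₀^∞ x e^{-a x} dx = a⁻²` to the
mean. The resulting mean is `u M'(w)` for `M(w) = pθ₁/(θ₁ - w) + (1 - p)θ₂/(θ₂ + w)`, and
`M'(w) > 0` because `w > (1 - p)θ₁ - pθ₂` says `(1 - p)(θ₁ - w) < p(θ₂ + w)`, while `w > 0` gives
`θ₂(θ₁ - w) < θ₁(θ₂ + w)`; multiplying the two inequalities compares the squared terms.
-/

open MeasureTheory Real Set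

lemma integral_mul_exp_neg_mul_Ioi {a : ℝ} (ha : 0 < a) :
    ∫ x in Ioi 0, x * exp (-(a * x)) = (a ^ 2)⁻¹ := by
  simpa [show (2 : ℝ) - 1 = 1 by norm_num] using integral_rpow_mul_exp_neg_mul_Ioi two_pos ha

lemma integrableOn_mul_exp_neg_mul_Ioi {a : ℝ} (ha : 0 < a) :
    IntegrableOn (fun x => x * exp (-(a * x))) (Ioi 0) :=
  Integrable.of_integral_ne_zero <| by rw [integral_mul_exp_neg_mul_Ioi ha]; positivity

lemma integral_mul_exp_mul_Iic {b : ℝ} (hb : 0 < b) :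
    ∫ x in Iic 0, x * exp (b * x) = -(b ^ 2)⁻¹ := by
  have h := integral_comp_neg_Iic 0 fun x => -(x * exp (-(b * x)))
  simp only [neg_zero, neg_neg, mul_neg, neg_mul, integral_neg,
    integral_mul_exp_neg_mul_Ioi hb] at h
  simpa only [integral_neg, neg_inj] using h

lemma integrableOn_mul_exp_mul_Iic {b : ℝ} (hb : 0 < b) :
    IntegrableOn (fun x => x * exp (b * x)) (Iic 0) :=
  Integrable.of_integral_ne_zero <| by rw [integral_mul_exp_mul_Iic hb]; simp [hb.ne']

lemma integral_mul_twoSidedExp {a b : ℝ} (ha : 0 < a) (hb : 0 < b) (α β : ℝ) :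
    ∫ x, x * (if 0 ≤ x then α * exp (-(a * x)) else β * exp (b * x))
      = α / a ^ 2 - β / b ^ 2 := by
  set f := fun x : ℝ => x * (if 0 ≤ x then α * exp (-(a * x)) else β * exp (b * x))
  have h_right : EqOn f (fun x => α * (x * exp (-(a * x)))) (Ioi 0) := fun x hx => by
    simp only [f, if_pos (mem_Ioi.mp hx).le]; ring
  have h_left : EqOn f (fun x => β * (x * exp (b * x))) (Iic 0) := fun x hx => by
    rcases (show x ≤ 0 from hx).lt_or_eq with hx | rfl
    · simp only [f, if_neg (not_le.mpr hx)]; ring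
    · simp [f]
  rw [← intervalIntegral.integral_Iic_add_Ioi
      (IntegrableOn.congr_fun ((integrableOn_mul_exp_mul_Iic hb).const_mul β) h_left.symm
        measurableSet_Iic)
      (IntegrableOn.congr_fun ((integrableOn_mul_exp_neg_mul_Ioi ha).const_mul α) h_right.symm
        measurableSet_Ioi),
    setIntegral_congr_fun measurableSet_Iic h_left, setIntegral_congr_fun measurableSet_Ioi h_right,
    integral_const_mul, integral_const_mul, integral_mul_exp_mul_Iic hb,
    integral_mul_exp_neg_mul_Ioi ha]
  ring

lemma twoSidedExp_mgf_deriv_pos {p θ₁ θ₂ w : ℝ} (hθ₂ : 0 < θ₂) (hw : 0 < w) (hwθ₁ : w < θ₁)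
    (hwp : (1 - p) * θ₁ - p * θ₂ < w) :
    0 < p * θ₁ / (θ₁ - w) ^ 2 - (1 - p) * θ₂ / (θ₂ + w) ^ 2 := by
  have ha : 0 < θ₁ - w := sub_pos.mpr hwθ₁
  have hb : 0 < θ₂ + w := by linarith
  have h_weights : (1 - p) * (θ₁ - w) < p * (θ₂ + w) := by linarith
  have hp : 0 < p := by nlinarith
  have h_rates : θ₂ * (θ₁ - w) < θ₁ * (θ₂ + w) := by nlinarith
  rw [sub_pos, div_lt_div_iff₀ (by positivity) (by positivity)]
  calc (1 - p) * θ₂ * (θ₁ - w) ^ 2 = ((1 - p) * (θ₁ - w)) * (θ₂ * (θ₁ - w)) := by ring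
    _ < (p * (θ₂ + w)) * (θ₁ * (θ₂ + w)) :=
        mul_lt_mul h_weights h_rates.le (by positivity) (by positivity)
    _ = p * θ₁ * (θ₂ + w) ^ 2 := by ring

theorem stmt_18_general (p θ₁ θ₂ u w : ℝ) (hθ₂ : 0 < θ₂)
    (hu : u ∈ Set.Ioo (0 : ℝ) 1)
    (hw₁ : max 0 ((1 - p) * θ₁ - p * θ₂) < w) (hw₂ : w < θ₁) :
    (∫ x : ℝ, x * (Real.exp (w * x) *
        (if 0 ≤ x then p * θ₁ * Real.exp (-θ₁ * x)
          else (1 - p) * θ₂ * Real.exp (θ₂ * x)) * u)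
      = p * θ₁ * u / (θ₁ - w) ^ 2 - (1 - p) * θ₂ * u / (θ₂ + w) ^ 2)
    ∧ 0 < p * θ₁ * u / (θ₁ - w) ^ 2 - (1 - p) * θ₂ * u / (θ₂ + w) ^ 2 := by
  obtain ⟨hw, hwp⟩ := max_lt_iff.mp hw₁
  have h_tilted : ∀ x : ℝ, Real.exp (w * x) *
      (if 0 ≤ x then p * θ₁ * Real.exp (-θ₁ * x) else (1 - p) * θ₂ * Real.exp (θ₂ * x)) * u
      = if 0 ≤ x then p * θ₁ * u * Real.exp (-((θ₁ - w) * x))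
        else (1 - p) * θ₂ * u * Real.exp ((θ₂ + w) * x) := fun x => by
    split_ifs
    · rw [show -((θ₁ - w) * x) = w * x + -θ₁ * x by ring, Real.exp_add]; ring
    · rw [show (θ₂ + w) * x = w * x + θ₂ * x by ring, Real.exp_add]; ring
  simp_rw [h_tilted]
  refine ⟨integral_mul_twoSidedExp (sub_pos.mpr hw₂) (by linarith) _ _, ?_⟩
  calc 0 < u * (p * θ₁ / (θ₁ - w) ^ 2 - (1 - p) * θ₂ / (θ₂ + w) ^ 2) :=
        mul_pos hu.1 (twoSidedExp_mgf_deriv_pos hθ₂ hw hw₂ hwp)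
    _ = _ := by ring

/-- under the measure tilted at `w_u` (where `M(w_u) = 1/u`),
the mean step of the two-sided exponential mixture equals
`pθ₁u/(θ₁-w_u)² - (1-p)θ₂u/(θ₂+w_u)²` and is strictly positive. -/
theorem stmt_18 (p θ₁ θ₂ u w : ℝ) (hθ₁ : 0 < θ₁) (hθ₂ : 0 < θ₂)
    (hp : p ∈ Set.Ioo (0 : ℝ) 1) (hu : u ∈ Set.Ioo (0 : ℝ) 1)
    (hw₁ : max 0 ((1 - p) * θ₁ - p * θ₂) < w) (hw₂ : w < θ₁)
    (hwu : p * θ₁ / (θ₁ - w) + (1 - p) * θ₂ / (θ₂ + w) = 1 / u) :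
    (∫ x : ℝ, x * (Real.exp (w * x) *
        (if 0 ≤ x then p * θ₁ * Real.exp (-θ₁ * x)
          else (1 - p) * θ₂ * Real.exp (θ₂ * x)) * u)
      = p * θ₁ * u / (θ₁ - w) ^ 2 - (1 - p) * θ₂ * u / (θ₂ + w) ^ 2)
    ∧ 0 < p * θ₁ * u / (θ₁ - w) ^ 2 - (1 - p) * θ₂ * u / (θ₂ + w) ^ 2 :=
  stmt_18_general p θ₁ θ₂ u w hθ₂ hu hw₁ hw₂
end
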